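/- arXiv:1401.2479 — 9 statements merged into one kernel-verified Lean document; each statement's English description precedes it below -/
import Mathlib

section
/- For every nonnegative 1-Lipschitz function Φ: ℂ → ℝ and all x ≠ y, the gradient in x of the suppressed kernel k_Φ(x,y) = conj(x−y)/(|x−y|² + Φ(x)Φ(y)) is bounded in norm by 4/|x−y|². -/
/-!
Write `D z = ‖z - y‖² + Φ z Φ y` and `a = ‖x - y‖`. Since `Φ` is 1-Lipschitz,
`|D x - D z| ≤ (a + ‖z - y‖ + Φ y) ‖x - z‖`, and the usual estimate for a difference of
quotients gives `‖k z - k x‖ ≤ g z ‖z - x‖` near `x` with `g` continuous, so the derivative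
at `x` (which is `0` if `k` is not differentiable there) has norm at most
`g x = (D x + a (2a + Φ y)) / (D x)²`. This is at most `4 / a²` because `D x ≥ a²` and,
using `Φ x ≥ Φ y - a`, also `D x ≥ a Φ y`.
-/

open Complex Filter Topology ComplexConjugate

theorem norm_fderiv_le_of_continuousAt_of_eventually_le {E F : Type*}
    [NormedAddCommGroup E] [NormedSpace ℝ E] [NormedAddCommGroup F] [NormedSpace ℝ F]
    {f : E → F} {g : E → ℝ} {x : E} (hg : ContinuousAt g x) (hgx : 0 ≤ g x)
    (hfg : ∀ᶠ z in 𝓝 x, ‖f z - f x‖ ≤ g z * ‖z - x‖) :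
    ‖fderiv ℝ f x‖ ≤ g x := by
  refine le_of_forall_pos_le_add fun ε hε => norm_fderiv_le_of_lip' ℝ (by positivity) ?_
  filter_upwards [hfg, hg.eventually_lt_const (lt_add_of_pos_right (g x) hε)] with z hz hgz
  exact hz.trans (mul_le_mul_of_nonneg_right hgz.le (norm_nonneg _))

theorem norm_div_sub_div_le {𝕜 : Type*} [NormedField 𝕜] (u v : 𝕜) {p q : 𝕜}
    (hp : p ≠ 0) (hq : q ≠ 0) :
    ‖u / p - v / q‖ ≤ (‖u - v‖ * ‖q‖ + ‖v‖ * ‖q - p‖) / (‖p‖ * ‖q‖) := by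
  have key : u / p - v / q = ((u - v) * q + v * (q - p)) / (p * q) := by
    field_simp; ring
  rw [key, norm_div, norm_mul]
  gcongr
  exact (norm_add_le _ _).trans (by rw [norm_mul, norm_mul])

theorem add_mul_div_mul_self_le_four_div_sq {a φ D : ℝ} (ha : 0 < a)
    (hD : a ^ 2 ≤ D) (haφ : a * φ ≤ D) :
    (D + a * (a + a + φ)) / (D * D) ≤ 4 / a ^ 2 := by
  have hD0 : 0 < D := (pow_pos ha 2).trans_le hD
  rw [div_le_div_iff₀ (by positivity) (by positivity)]
  nlinarith [mul_le_mul_of_nonneg_right hD hD0.le, mul_le_mul hD hD (sq_nonneg a) hD0.le,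
    mul_le_mul haφ hD (sq_nonneg a) hD0.le]

theorem abs_sq_norm_sub_sq_norm_le {E : Type*} [SeminormedAddCommGroup E] (u v : E) :
    |‖u‖ ^ 2 - ‖v‖ ^ 2| ≤ (‖u‖ + ‖v‖) * ‖u - v‖ := by
  rw [sq_sub_sq, abs_mul, abs_of_nonneg (add_nonneg (norm_nonneg u) (norm_nonneg v))]
  exact mul_le_mul_of_nonneg_left (abs_norm_sub_norm_le u v) (by positivity)

noncomputable def kernelDenom (Φ : ℂ → ℝ) (y z : ℂ) : ℝ := ‖z - y‖ ^ 2 + Φ z * Φ y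

section kernelDenom

variable {Φ : ℂ → ℝ} {x y z : ℂ}

theorem sq_norm_sub_le_kernelDenom (hΦ0 : ∀ x, 0 ≤ Φ x) : ‖z - y‖ ^ 2 ≤ kernelDenom Φ y z :=
  le_add_of_nonneg_right (mul_nonneg (hΦ0 z) (hΦ0 y))

theorem kernelDenom_pos (hΦ0 : ∀ x, 0 ≤ Φ x) (hzy : z ≠ y) : 0 < kernelDenom Φ y z :=
  (pow_pos (norm_pos_iff.2 (sub_ne_zero.2 hzy)) 2).trans_le (sq_norm_sub_le_kernelDenom hΦ0)

theorem norm_sub_mul_le_kernelDenom (hΦ0 : ∀ x, 0 ≤ Φ x)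
    (hΦlip : ∀ x y : ℂ, |Φ x - Φ y| ≤ ‖x - y‖) : ‖z - y‖ * Φ y ≤ kernelDenom Φ y z := by
  have hΦz : Φ y - ‖z - y‖ ≤ Φ z := by
    have := (le_abs_self _).trans (hΦlip y z)
    rw [norm_sub_rev] at this
    linarith
  -- `b² + Φ y (Φ y - b) - b Φ y = (b - Φ y)²` with `b = ‖z - y‖`
  unfold kernelDenom
  nlinarith [mul_le_mul_of_nonneg_right hΦz (hΦ0 y), sq_nonneg (‖z - y‖ - Φ y)]

theorem abs_kernelDenom_sub_le (hΦy : 0 ≤ Φ y) (hΦlip : ∀ x y : ℂ, |Φ x - Φ y| ≤ ‖x - y‖) :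
    |kernelDenom Φ y x - kernelDenom Φ y z| ≤ (‖x - y‖ + ‖z - y‖ + Φ y) * ‖x - z‖ := by
  have hsq := abs_sq_norm_sub_sq_norm_le (x - y) (z - y)
  have hΦ : |(Φ x - Φ z) * Φ y| ≤ ‖x - z‖ * Φ y := by
    rw [abs_mul, abs_of_nonneg hΦy]
    exact mul_le_mul_of_nonneg_right (hΦlip x z) hΦy
  rw [sub_sub_sub_cancel_right] at hsq
  calc |kernelDenom Φ y x - kernelDenom Φ y z|
      = |(‖x - y‖ ^ 2 - ‖z - y‖ ^ 2) + (Φ x - Φ z) * Φ y| := by unfold kernelDenom; ring_nf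
    _ ≤ _ := (abs_add_le _ _).trans (add_le_add hsq hΦ)
    _ = _ := by ring

theorem norm_kernel_sub_le (hΦ0 : ∀ x, 0 ≤ Φ x) (hΦlip : ∀ x y : ℂ, |Φ x - Φ y| ≤ ‖x - y‖)
    (hxy : x ≠ y) (hzy : z ≠ y) :
    ‖conj (z - y) / (kernelDenom Φ y z : ℂ) - conj (x - y) / (kernelDenom Φ y x : ℂ)‖ ≤
      (kernelDenom Φ y x + ‖x - y‖ * (‖x - y‖ + ‖z - y‖ + Φ y)) /
        (kernelDenom Φ y z * kernelDenom Φ y x) * ‖z - x‖ := by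
  have hDx := kernelDenom_pos hΦ0 hxy
  have hDz := kernelDenom_pos hΦ0 hzy
  refine (norm_div_sub_div_le _ _ (ofReal_ne_zero.2 hDz.ne') (ofReal_ne_zero.2 hDx.ne')).trans ?_
  rw [← map_sub, sub_sub_sub_cancel_right, ← ofReal_sub, norm_conj, norm_conj, norm_real,
    norm_real, norm_real, Real.norm_of_nonneg hDx.le, Real.norm_of_nonneg hDz.le,
    Real.norm_eq_abs, div_mul_eq_mul_div]
  gcongr
  have hD := abs_kernelDenom_sub_le (hΦ0 y) hΦlip (x := x) (z := z)
  rw [norm_sub_rev x z] at hD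
  nlinarith [mul_le_mul_of_nonneg_left hD (norm_nonneg (x - y))]

end kernelDenom

/-- For a nonnegative 1-Lipschitz function `Φ : ℂ → ℝ` and `x ≠ y`, the gradient in `x`
of the suppressed kernel `k_Φ(x,y) = conj(x-y)/(|x-y|² + Φ(x)Φ(y))` is bounded in norm
by `4 / |x-y|²`. -/
theorem suppressed_kernel_gradient_bound
    (Φ : ℂ → ℝ) (hΦ0 : ∀ x, 0 ≤ Φ x)
    (hΦlip : ∀ x y : ℂ, |Φ x - Φ y| ≤ ‖x - y‖) :
    ∀ x y : ℂ, x ≠ y →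
      ‖fderiv ℝ (fun z : ℂ =>
          (starRingEnd ℂ) (z - y) /
            ((‖z - y‖ ^ 2 + Φ z * Φ y : ℝ) : ℂ)) x‖ ≤
        4 / (‖x - y‖) ^ 2 := by
  intro x y hxy
  have hΦc : Continuous Φ := (LipschitzWith.of_dist_le_mul (K := 1) fun u v => by
    simpa [Real.dist_eq, dist_eq] using hΦlip u v).continuous
  have hDx := kernelDenom_pos hΦ0 hxy
  have ha := norm_pos_iff.2 (sub_ne_zero.2 hxy)
  refine (norm_fderiv_le_of_continuousAt_of_eventually_le
    (g := fun z => (kernelDenom Φ y x + ‖x - y‖ * (‖x - y‖ + ‖z - y‖ + Φ y)) /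
      (kernelDenom Φ y z * kernelDenom Φ y x)) ?_ ?_ ?_).trans ?_
  · unfold kernelDenom
    fun_prop (disch := positivity)
  · have := hΦ0 y
    positivity
  · filter_upwards [eventually_ne_nhds hxy] with z hzy
    exact norm_kernel_sub_le hΦ0 hΦlip hxy hzy
  · exact add_mul_div_mul_self_le_four_div_sq ha (sq_norm_sub_le_kernelDenom hΦ0)
      (norm_sub_mul_le_kernelDenom hΦ0 hΦlip)
end

section
/- If ξ is a nonnegative random variable on a probability space (Ω, P), 0 < β < 1, and E_β ξ := inf{ ∫_{Ω∖Ω₁} ξ dP : P(Ω₁) ≤ β }, then P{ ξ ≥ β⁻¹ E_β ξ } ≤ 2β (assuming E_β ξ > 0). -/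
open MeasureTheory

/-! With `c = β⁻¹ E_β ξ`, deleting a set `Ω₁` with `P Ω₁ ≤ β` leaves at least
`P {ξ ≥ c} - β` of the mass of `{ξ ≥ c}`, where `ξ ≥ c`; so every competitor in the infimum, and
hence `E_β ξ` itself, is at least `c (P {ξ ≥ c} - β)`. Dividing by `c > 0` gives
`P {ξ ≥ c} - β ≤ β`. -/

theorem mul_measureReal_sub_le_setIntegral_compl {α : Type*} [MeasurableSpace α]
    {μ : Measure α} [IsFiniteMeasure μ] {f : α → ℝ} {s t : Set α} {c : ℝ}
    (hf : Integrable f μ) (hf_nonneg : 0 ≤ f) (hs : MeasurableSet s) (ht : MeasurableSet t)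
    (hc : 0 ≤ c) (hct : ∀ x ∈ t, c ≤ f x) :
    c * (μ.real t - μ.real s) ≤ ∫ x in sᶜ, f x ∂μ :=
  calc c * (μ.real t - μ.real s) ≤ c * μ.real (t \ s) := by gcongr; exact le_measureReal_sdiff
    _ ≤ ∫ x in t \ s, f x ∂μ :=
      setIntegral_ge_of_const_le_real (ht.diff hs) (measure_ne_top μ _)
        (fun x hx => hct x hx.1) hf.integrableOn
    _ ≤ ∫ x in sᶜ, f x ∂μ :=
      setIntegral_mono_set hf.integrableOn (ae_of_all _ hf_nonneg)
        (Set.sdiff_subset_compl t s).eventuallyLE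

theorem truncated_expectation_chebyshev_general
    {Ω : Type*} [MeasurableSpace Ω] (P : Measure Ω) [IsProbabilityMeasure P]
    (ξ : Ω → ℝ) (hξmeas : Measurable ξ) (hξnonneg : ∀ ω, 0 ≤ ξ ω)
    (hξint : Integrable ξ P)
    (β : ℝ) (hβ0 : 0 < β)
    (Eβ : ℝ)
    (hEβ : Eβ = sInf {I : ℝ | ∃ Ω₁ : Set Ω, MeasurableSet Ω₁ ∧
      P Ω₁ ≤ ENNReal.ofReal β ∧ I = ∫ ω in Ω₁ᶜ, ξ ω ∂P})
    (hEβpos : 0 < Eβ) :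
    P {ω | β⁻¹ * Eβ ≤ ξ ω} ≤ ENNReal.ofReal (2 * β) := by
  set c := β⁻¹ * Eβ
  set A := {ω | c ≤ ξ ω}
  have hA : MeasurableSet A := measurableSet_le measurable_const hξmeas
  have hlower : c * (P.real A - β) ≤ Eβ := by
    rw [hEβ]
    refine le_csInf ⟨_, ∅, .empty, by simp, rfl⟩ ?_
    rintro _ ⟨Ω₁, hΩ₁, hΩ₁β, rfl⟩
    calc c * (P.real A - β) ≤ c * (P.real A - P.real Ω₁) := by
          gcongr; exact ENNReal.toReal_le_of_le_ofReal hβ0.le hΩ₁β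
      _ ≤ ∫ ω in Ω₁ᶜ, ξ ω ∂P :=
          mul_measureReal_sub_le_setIntegral_compl hξint hξnonneg hΩ₁ hA (by positivity)
            fun _ hω => hω
  have hβc : β * c = Eβ := mul_inv_cancel_left₀ hβ0.ne' Eβ
  have hA_le : P.real A - β ≤ β := by
    refine le_of_mul_le_mul_left ?_ hEβpos
    calc Eβ * (P.real A - β) = β * (c * (P.real A - β)) := by rw [← mul_assoc, hβc]
      _ ≤ β * Eβ := by gcongr
      _ = Eβ * β := mul_comm β Eβ
  rw [← ofReal_measureReal]
  exact ENNReal.ofReal_le_ofReal (by linarith)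

/-- If `ξ` is a nonnegative integrable random variable on a probability space `(Ω, P)`,
`0 < β < 1`, and `E_β ξ := inf{ ∫_{Ω∖Ω₁} ξ dP : P(Ω₁) ≤ β }` is positive, then
`P{ ξ ≥ β⁻¹ E_β ξ } ≤ 2β`. -/
theorem truncated_expectation_chebyshev
    {Ω : Type*} [MeasurableSpace Ω] (P : Measure Ω) [IsProbabilityMeasure P]
    (ξ : Ω → ℝ) (hξmeas : Measurable ξ) (hξnonneg : ∀ ω, 0 ≤ ξ ω)
    (hξint : Integrable ξ P)
    (β : ℝ) (hβ0 : 0 < β) (hβ1 : β < 1)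
    (Eβ : ℝ)
    (hEβ : Eβ = sInf {I : ℝ | ∃ Ω₁ : Set Ω, MeasurableSet Ω₁ ∧
      P Ω₁ ≤ ENNReal.ofReal β ∧ I = ∫ ω in Ω₁ᶜ, ξ ω ∂P})
    (hEβpos : 0 < Eβ) :
    P {ω | β⁻¹ * Eβ ≤ ξ ω} ≤ ENNReal.ofReal (2 * β) :=
  truncated_expectation_chebyshev_general P ξ hξmeas hξnonneg hξint β hβ0 Eβ hEβ hEβpos
end

section
/- Let μ be a positive Borel measure on ℂ such that limsup_{r→0} μ(B(x,r))/r < ∞ for μ-a.e. x (non-uniform linear growth), normalized so μ(ℂ) = 1. Let H_M be the union of all M-non-Ahlfors disks, i.e., all B(x,R) with x ∈ supp μ and μ(B(x,R)) ≥ M R. Then μ(H_M) → 0 as M → ∞. -/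
open MeasureTheory Metric Filter Set Topology

/-!
Replace every disk `B̄(x,R)` with `μ(B̄(x,R)) ≥ M R` by the open disk `B(x,2R)`. The resulting
unions `U_M ⊇ H_M` are open and decrease in `M`, so `μ(U_M) → μ(⋂ U_M)` by continuity from
above. If `y ∈ B(x,2R)` then `B̄(x,R) ⊆ B̄(y,3R)`, so `M R ≤ μ(B̄(y,3R))`; as `μ` is finite,
`R ≤ μ(ℂ)/M` is small for large `M`. At a point where `μ(B̄(y,r)) < c r` for small `r`
this forces `M < 3c`, hence `y ∉ U_M` for large `M`. By the growth hypothesis `⋂ U_M`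
is therefore `μ`-null.
-/

variable {α : Type*} [PseudoMetricSpace α] [MeasurableSpace α]

def enlargedNonAhlforsUnion (μ : Measure α) (M : ℝ) : Set α :=
  ⋃ (x : α) (R : ℝ) (_ : 0 < R ∧ ENNReal.ofReal (M * R) ≤ μ (closedBall x R)),
    ball x (2 * R)

section enlargedNonAhlforsUnion

variable {μ : Measure α}

theorem isOpen_enlargedNonAhlforsUnion (μ : Measure α) (M : ℝ) :
    IsOpen (enlargedNonAhlforsUnion μ M) :=
  isOpen_iUnion fun _ => isOpen_iUnion fun _ => isOpen_iUnion fun _ => isOpen_ball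

theorem antitone_enlargedNonAhlforsUnion (μ : Measure α) :
    Antitone (enlargedNonAhlforsUnion μ) := by
  intro M M' hM y hy
  simp only [enlargedNonAhlforsUnion, mem_iUnion] at hy ⊢
  obtain ⟨x, R, ⟨hR, hMR⟩, hy⟩ := hy
  exact ⟨x, R, ⟨hR, (ENNReal.ofReal_le_ofReal (by gcongr)).trans hMR⟩, hy⟩

theorem closedBall_subset_enlargedNonAhlforsUnion {M R : ℝ} {x : α} (hR : 0 < R)
    (hMR : ENNReal.ofReal (M * R) ≤ μ (closedBall x R)) :
    closedBall x R ⊆ enlargedNonAhlforsUnion μ M := fun _ hy =>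
  mem_iUnion₂.2
    ⟨x, R, mem_iUnion.2 ⟨⟨hR, hMR⟩, closedBall_subset_ball (by linarith) hy⟩⟩

theorem exists_ofReal_mul_le_measure_closedBall_of_mem_enlargedNonAhlforsUnion
    {M : ℝ} {y : α} (hy : y ∈ enlargedNonAhlforsUnion μ M) :
    ∃ R > 0, ENNReal.ofReal (M * R) ≤ μ (closedBall y (3 * R)) := by
  simp only [enlargedNonAhlforsUnion, mem_iUnion, mem_ball] at hy
  obtain ⟨x, R, ⟨hR, hMR⟩, hyx⟩ := hy
  have hsub : closedBall x R ⊆ closedBall y (3 * R) :=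
    closedBall_subset_closedBall' (by rw [dist_comm]; linarith)
  exact ⟨R, hR, hMR.trans (measure_mono hsub)⟩

end enlargedNonAhlforsUnion

theorem exists_eventually_lt_ofReal_mul_of_limsup_div_lt_top {f : ℝ → ENNReal}
    (hf : limsup (fun r => f r / ENNReal.ofReal r) (𝓝[>] 0) < ⊤) :
    ∃ c : ℝ, ∀ᶠ r in 𝓝[>] 0, f r < ENNReal.ofReal (c * r) := by
  obtain ⟨C, hlimsup, hC⟩ := exists_between hf
  refine ⟨C.toReal, ?_⟩
  filter_upwards [eventually_lt_of_limsup_lt hlimsup, self_mem_nhdsWithin] with r hr hrpos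
  rwa [ENNReal.div_lt_iff (Or.inl (ENNReal.ofReal_pos.2 hrpos).ne') (Or.inl ENNReal.ofReal_ne_top),
    ← ENNReal.ofReal_toReal hC.ne, ← ENNReal.ofReal_mul ENNReal.toReal_nonneg] at hr

theorem eventually_notMem_enlargedNonAhlforsUnion {μ : Measure α} [IsFiniteMeasure μ] {y : α}
    (hy : limsup (fun r => μ (closedBall y r) / ENNReal.ofReal r) (𝓝[>] 0) < ⊤) :
    ∀ᶠ M in atTop, y ∉ enlargedNonAhlforsUnion μ M := by
  obtain ⟨c, hc⟩ := exists_eventually_lt_ofReal_mul_of_limsup_div_lt_top hy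
  obtain ⟨δ, hδ, hδc⟩ := mem_nhdsGT_iff_exists_Ioo_subset.1 hc
  filter_upwards [eventually_gt_atTop 0, eventually_gt_atTop (3 * c),
    eventually_gt_atTop (3 * μ.real univ / δ)] with M hM hMc hMδ hmem
  obtain ⟨R, hR, hMR⟩ :=
    exists_ofReal_mul_le_measure_closedBall_of_mem_enlargedNonAhlforsUnion hmem
  have hMR_univ : M * R ≤ μ.real univ :=
    (ENNReal.ofReal_le_iff_le_toReal (measure_ne_top μ univ)).1
      (hMR.trans (measure_mono (subset_univ _)))
  have h3R : 3 * R < δ := by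
    rw [div_lt_iff₀ hδ] at hMδ
    nlinarith
  have hlt : ENNReal.ofReal (M * R) < ENNReal.ofReal (c * (3 * R)) :=
    hMR.trans_lt (hδc ⟨by positivity, h3R⟩)
  have := ((ENNReal.ofReal_lt_ofReal_iff').1 hlt).1
  nlinarith

theorem measure_iInter_enlargedNonAhlforsUnion_eq_zero {μ : Measure α} [IsFiniteMeasure μ]
    (hgrowth : ∀ᵐ y ∂μ,
      limsup (fun r => μ (closedBall y r) / ENNReal.ofReal r) (𝓝[>] 0) < ⊤) :
    μ (⋂ M, enlargedNonAhlforsUnion μ M) = 0 := by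
  rw [measure_eq_zero_iff_ae_notMem]
  filter_upwards [hgrowth] with y hy hmem
  obtain ⟨M, hM⟩ := (eventually_notMem_enlargedNonAhlforsUnion hy).exists
  exact hM (mem_iInter.1 hmem M)

theorem tendsto_measure_enlargedNonAhlforsUnion [OpensMeasurableSpace α] {μ : Measure α}
    [IsFiniteMeasure μ]
    (hgrowth : ∀ᵐ y ∂μ,
      limsup (fun r => μ (closedBall y r) / ENNReal.ofReal r) (𝓝[>] 0) < ⊤) :
    Tendsto (fun M => μ (enlargedNonAhlforsUnion μ M)) atTop (𝓝 0) := by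
  rw [← measure_iInter_enlargedNonAhlforsUnion_eq_zero hgrowth]
  exact tendsto_measure_iInter_atTop
    (fun M => (isOpen_enlargedNonAhlforsUnion μ M).measurableSet.nullMeasurableSet)
    (antitone_enlargedNonAhlforsUnion μ) ⟨0, measure_ne_top μ _⟩

/-- Let `μ` be a probability measure on `ℂ` with non-uniform linear growth:
for `μ`-a.e. `x`, `limsup_{r→0} μ(B(x,r))/r < ∞`. Let `H_M` be the union of all
`M`-non-Ahlfors disks, i.e. all `B(x,R)` with `x` in the support of `μ`, `R > 0` and
`μ(B(x,R)) ≥ M R`. Then `μ(H_M) → 0` as `M → ∞`. -/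
theorem nonAhlfors_union_tendsto_zero
    (μ : Measure ℂ) [IsProbabilityMeasure μ]
    (hgrowth : ∀ᵐ x ∂μ,
      Filter.limsup (fun r : ℝ => μ (closedBall x r) / ENNReal.ofReal r)
        (nhdsWithin 0 (Set.Ioi 0)) < ⊤) :
    Tendsto
      (fun M : ℝ =>
        μ {y : ℂ | ∃ x : ℂ, (∀ ε > (0:ℝ), μ (closedBall x ε) ≠ 0) ∧
            ∃ R > (0:ℝ), ENNReal.ofReal (M * R) ≤ μ (closedBall x R) ∧
              y ∈ closedBall x R})
      atTop (nhds 0) := by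
  refine tendsto_of_tendsto_of_tendsto_of_le_of_le tendsto_const_nhds
    (tendsto_measure_enlargedNonAhlforsUnion hgrowth) (fun _ => zero_le) fun M => measure_mono ?_
  rintro y ⟨x, -, R, hR, hMR, hy⟩
  exact closedBall_subset_enlargedNonAhlforsUnion hR hMR hy
end

section
/- Schur-test step for negligible contours: Let μ be a positive Borel measure on ℂ, G ⊂ ℂ with μ{x : dist(x,G) ≤ r} ≤ M̃ r for all r > 0, and Ω ⊆ ℂ ∖ G. Then for every point x₂ ∉ G, ∫_Ω (1/max(dist(x₁,G), dist(x₂,G))) · dist(x₁,G)^{−1/2} dμ(x₁) ≤ 4 M̃ · dist(x₂,G)^{−1/2}. -/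
open MeasureTheory Metric Set

/-- Schur-test step for negligible contours: if `G` is `M̃`-negligible for `μ` and
`Ω ⊆ ℂ ∖ G`, then for every point `x₂` with `dist(x₂,G) > 0`,
`∫_Ω (1/max(dist(x₁,G), dist(x₂,G))) · dist(x₁,G)^{−1/2} dμ(x₁)
  ≤ 4 M̃ · dist(x₂,G)^{−1/2}`. -/
theorem schur_test_negligible
    (μ : Measure ℂ) (G : Set ℂ) (Mt : ℝ) (hMt : 0 < Mt)
    (hneg : ∀ r > (0:ℝ), μ {x : ℂ | infDist x G ≤ r} ≤ ENNReal.ofReal (Mt * r))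
    (Ω : Set ℂ) (hΩ : Ω ⊆ Gᶜ)
    (x₂ : ℂ) (hx₂ : 0 < infDist x₂ G) :
    ∫⁻ x₁ in Ω,
        ENNReal.ofReal
          (1 / max (infDist x₁ G) (infDist x₂ G) * (1 / Real.sqrt (infDist x₁ G))) ∂μ ≤
      ENNReal.ofReal (4 * Mt * (1 / Real.sqrt (infDist x₂ G))) := by
  set D := infDist x₂ G with hD
  have hDpos : 0 < D := hx₂
  set f : ℝ → ℝ := fun s => 1 / max s D * (1 / Real.sqrt s) with hf
  set T : ℝ := D ^ (-(3:ℝ)/2) with hT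
  have hTpos : 0 < T := Real.rpow_pos_of_pos hDpos _
  set h : ℝ → ℝ := fun t => min (t ^ (-(2:ℝ)/3)) (t ^ (-(2:ℝ)) * D ^ (-(2:ℝ))) with hh
  have hdmeas : Measurable fun x : ℂ => infDist x G := (continuous_infDist_pt G).measurable
  have hfmeas : Measurable f := by
    apply Measurable.mul
    · exact measurable_const.div (measurable_id.max measurable_const)
    · exact measurable_const.div Real.continuous_sqrt.measurable
  have f_nn : ∀ s : ℝ, 0 ≤ f s := by
    intro s
    apply mul_nonneg
    · exact div_nonneg one_pos.le (le_trans hDpos.le (le_max_right _ _))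
    · positivity
  -- layer cake
  have layer : ∫⁻ x₁ in Ω,
        ENNReal.ofReal
          (1 / max (infDist x₁ G) D * (1 / Real.sqrt (infDist x₁ G))) ∂μ =
      ∫⁻ t in Ioi (0:ℝ), (μ.restrict Ω) {a : ℂ | t < f (infDist a G)} :=
    lintegral_eq_lintegral_meas_lt (μ.restrict Ω)
      (Filter.Eventually.of_forall fun x => f_nn (infDist x G))
      ((hfmeas.comp hdmeas).aemeasurable)
  -- the pointwise superlevel-set inclusion
  have hstep : ∀ x : ℂ, ∀ t : ℝ, 0 < t → t < f (infDist x G) → infDist x G ≤ h t := by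
    intro x t ht hlt
    set s := infDist x G with hs
    have hs0 : 0 ≤ s := infDist_nonneg
    rcases eq_or_lt_of_le hs0 with hs0' | hspos
    · exfalso
      rw [hf] at hlt
      simp only [← hs0', Real.sqrt_zero, div_zero, mul_zero] at hlt
      linarith
    have hsqrt : 0 < Real.sqrt s := Real.sqrt_pos.mpr hspos
    have hsq : Real.sqrt s ^ 2 = s := Real.sq_sqrt hs0
    have hmax : 0 < max s D := lt_of_lt_of_le hDpos (le_max_right _ _)
    have key : t * (max s D * Real.sqrt s) < 1 := by
      have hfs : f s = 1 / (max s D * Real.sqrt s) := by rw [hf]; field_simp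
      rw [hfs, lt_div_iff₀ (by positivity)] at hlt
      linarith
    refine le_min ?_ ?_
    · -- s ≤ t ^ (-2/3)
      have h32 : s ^ ((3:ℝ)/2) ≤ t⁻¹ := by
        have hrw : s ^ ((3:ℝ)/2) = s * Real.sqrt s := by
          rw [show (3:ℝ)/2 = 1 + 1/2 by norm_num, Real.rpow_add hspos, Real.rpow_one,
            Real.sqrt_eq_rpow]
        rw [hrw]
        nlinarith [mul_inv_cancel₀ ht.ne',
          mul_le_mul_of_nonneg_right (le_max_left s D) hsqrt.le]
      calc s = (s ^ ((3:ℝ)/2)) ^ ((2:ℝ)/3) := by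
              rw [← Real.rpow_mul hs0]; norm_num
        _ ≤ (t⁻¹) ^ ((2:ℝ)/3) := Real.rpow_le_rpow (by positivity) h32 (by norm_num)
        _ = t ^ (-(2:ℝ)/3) := by
              rw [← Real.rpow_neg_one t, ← Real.rpow_mul ht.le]; norm_num
    · -- s ≤ t ^ (-2) * D ^ (-2)
      have e : t ^ (-(2:ℝ)) * D ^ (-(2:ℝ)) = (t ^ 2 * D ^ 2)⁻¹ := by
        rw [show (-(2:ℝ)) = -((2:ℕ):ℝ) by norm_num, Real.rpow_neg ht.le,
          Real.rpow_neg hDpos.le, Real.rpow_natCast, Real.rpow_natCast, mul_inv]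
      rw [e]
      have key2 : t * (D * Real.sqrt s) < 1 := by
        nlinarith [mul_le_mul_of_nonneg_right (le_max_right s D) hsqrt.le]
      have key3 : (t * (D * Real.sqrt s)) ^ 2 < 1 :=
        pow_lt_one₀ (by positivity) key2 (by norm_num)
      have key4 : t ^ 2 * D ^ 2 * s < 1 := by nlinarith [hsq]
      rw [← one_div, le_div_iff₀ (by positivity)]
      nlinarith [key4]
  have hhpos : ∀ t : ℝ, 0 < t → 0 < h t := fun t ht =>
    lt_min (Real.rpow_pos_of_pos ht _)
      (mul_pos (Real.rpow_pos_of_pos ht _) (Real.rpow_pos_of_pos hDpos _))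
  -- bound the level-set measures
  have step2 : ∫⁻ t in Ioi (0:ℝ), (μ.restrict Ω) {a : ℂ | t < f (infDist a G)} ≤
      ∫⁻ t in Ioi (0:ℝ), ENNReal.ofReal (Mt * h t) := by
    refine setLIntegral_mono' measurableSet_Ioi fun t ht => ?_
    have ht : 0 < t := ht
    calc (μ.restrict Ω) {a : ℂ | t < f (infDist a G)}
        ≤ μ {a : ℂ | t < f (infDist a G)} := Measure.restrict_le_self _
      _ ≤ μ {x : ℂ | infDist x G ≤ h t} :=
          measure_mono fun a ha => hstep a t ht ha
      _ ≤ ENNReal.ofReal (Mt * h t) := hneg (h t) (hhpos t ht)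
  -- split
  have hsplit : (Ioi (0:ℝ)) = Ioc 0 T ∪ Ioi T := (Ioc_union_Ioi_eq_Ioi hTpos.le).symm
  have hDhalf : (1:ℝ)/Real.sqrt D = D ^ (-(1:ℝ)/2) := by
    rw [Real.sqrt_eq_rpow, one_div, ← Real.rpow_neg hDpos.le]; norm_num
  -- piece A
  have pieceA : ∫⁻ t in Ioc (0:ℝ) T, ENNReal.ofReal (Mt * h t) ≤
      ENNReal.ofReal (Mt * (3 * D ^ (-(1:ℝ)/2))) := by
    have mono : ∫⁻ t in Ioc (0:ℝ) T, ENNReal.ofReal (Mt * h t) ≤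
        ∫⁻ t in Ioc (0:ℝ) T, ENNReal.ofReal (Mt * t ^ (-(2:ℝ)/3)) :=
      setLIntegral_mono' measurableSet_Ioc fun t ht =>
        ENNReal.ofReal_le_ofReal (mul_le_mul_of_nonneg_left (min_le_left _ _) hMt.le)
    refine mono.trans ?_
    have hint : IntegrableOn (fun t : ℝ => Mt * t ^ (-(2:ℝ)/3)) (Ioc 0 T) :=
      Integrable.const_mul
        ((intervalIntegrable_iff_integrableOn_Ioc_of_le hTpos.le).mp
          (intervalIntegral.intervalIntegrable_rpow' (by norm_num))) Mt
    have hnn : 0 ≤ᵐ[volume.restrict (Ioc (0:ℝ) T)] fun t => Mt * t ^ (-(2:ℝ)/3) :=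
      (ae_restrict_iff' measurableSet_Ioc).mpr
        (Filter.Eventually.of_forall fun t ht => by
          have : (0:ℝ) < t := ht.1; positivity)
    rw [← ofReal_integral_eq_lintegral_ofReal hint hnn]
    apply ENNReal.ofReal_le_ofReal
    rw [MeasureTheory.integral_const_mul]
    apply mul_le_mul_of_nonneg_left _ hMt.le
    rw [← intervalIntegral.integral_of_le hTpos.le,
      integral_rpow (Or.inl (by norm_num)), Real.zero_rpow (by norm_num), hT,
      ← Real.rpow_mul hDpos.le]
    norm_num
    ring_nf
    exact le_rfl
  -- piece B
  have pieceB : ∫⁻ t in Ioi T, ENNReal.ofReal (Mt * h t) ≤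
      ENNReal.ofReal (Mt * D ^ (-(1:ℝ)/2)) := by
    have mono : ∫⁻ t in Ioi T, ENNReal.ofReal (Mt * h t) ≤
        ∫⁻ t in Ioi T, ENNReal.ofReal (Mt * D ^ (-(2:ℝ)) * t ^ (-(2:ℝ))) := by
      refine setLIntegral_mono' measurableSet_Ioi fun t ht => ?_
      apply ENNReal.ofReal_le_ofReal
      have : h t ≤ t ^ (-(2:ℝ)) * D ^ (-(2:ℝ)) := min_le_right _ _
      calc Mt * h t ≤ Mt * (t ^ (-(2:ℝ)) * D ^ (-(2:ℝ))) :=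
            mul_le_mul_of_nonneg_left this hMt.le
        _ = Mt * D ^ (-(2:ℝ)) * t ^ (-(2:ℝ)) := by ring
    refine mono.trans ?_
    have hint : IntegrableOn (fun t : ℝ => Mt * D ^ (-(2:ℝ)) * t ^ (-(2:ℝ))) (Ioi T) :=
      (integrableOn_Ioi_rpow_of_lt (by norm_num) hTpos).const_mul _
    have hnn : 0 ≤ᵐ[volume.restrict (Ioi T)] fun t => Mt * D ^ (-(2:ℝ)) * t ^ (-(2:ℝ)) :=
      (ae_restrict_iff' measurableSet_Ioi).mpr
        (Filter.Eventually.of_forall fun t ht => by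
          have : (0:ℝ) < t := hTpos.trans ht; positivity)
    rw [← ofReal_integral_eq_lintegral_ofReal hint hnn]
    apply ENNReal.ofReal_le_ofReal
    rw [MeasureTheory.integral_const_mul, integral_Ioi_rpow_of_lt (by norm_num) hTpos]
    have hTval : (-(T ^ ((-(2:ℝ))+1)) / ((-(2:ℝ))+1)) = D ^ ((3:ℝ)/2) := by
      rw [show ((-(2:ℝ))+1) = -1 by norm_num, hT, ← Real.rpow_mul hDpos.le]
      norm_num
    rw [hTval, mul_assoc, ← Real.rpow_add hDpos]
    norm_num
  -- assemble
  calc ∫⁻ x₁ in Ω,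
        ENNReal.ofReal
          (1 / max (infDist x₁ G) D * (1 / Real.sqrt (infDist x₁ G))) ∂μ
      = ∫⁻ t in Ioi (0:ℝ), (μ.restrict Ω) {a : ℂ | t < f (infDist a G)} := layer
    _ ≤ ∫⁻ t in Ioi (0:ℝ), ENNReal.ofReal (Mt * h t) := step2
    _ = (∫⁻ t in Ioc (0:ℝ) T, ENNReal.ofReal (Mt * h t)) +
        ∫⁻ t in Ioi T, ENNReal.ofReal (Mt * h t) := by
          rw [hsplit, lintegral_union measurableSet_Ioi Ioc_disjoint_Ioi_same]
    _ ≤ ENNReal.ofReal (Mt * (3 * D ^ (-(1:ℝ)/2))) +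
        ENNReal.ofReal (Mt * D ^ (-(1:ℝ)/2)) := add_le_add pieceA pieceB
    _ ≤ ENNReal.ofReal (4 * Mt * (1 / Real.sqrt D)) := by
          rw [← ENNReal.ofReal_add (by positivity) (by positivity), hDhalf]
          exact ENNReal.ofReal_le_ofReal (le_of_eq (by ring))
end

section
/- Blanket Lemma: Let μ be a positive Borel measure on ℂ, and b(x,y) a kernel with |b(x,y)| ≤ 1/|x−y|. Define (b*f)(x) := sup_{r>0} |∫_{|y−x|>r} b(x,y) f(y) dμ(y)| and (M_{1,R} f)(x) := sup_{r>R} (1/r) ∫_{B(x,r)} |f| dμ. Then for every R > 0 and every decreasing function φ: [0,∞) → [0,1], one has |∫_{|y−x|>R} b(x,y) φ(|x−y|) f(y) dμ(y)| ≤ 2 (b*f)(x) + 2 (M_{1,R} f)(x). -/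
/-!
Layer cake: `φ(|x-y|) = ∫₀¹ 1{s < φ(|x-y|)} ds`, so after swapping the integrals the weighted
truncated integral is an average over `s ∈ (0,1)` of integrals over the superlevel sets
`{s < φ(|y-x|)}`. As `φ` is nonincreasing, such a set is a ball around `x` (open or closed), so
its part outside `B(x,R)` is `{|y-x| > R}` minus `{|y-x| > c}` or `{|y-x| ≥ c}`; the latter is a
limit of truncation regions `{|y-x| > r}`, `r ↑ c`. Each level integral is thus at most
`2 (b*f)(x)`.
-/

open MeasureTheory Metric Set Filter

theorem IsUpperSet.eq_Ici_or_eq_Ioi_csInf {α : Type*} [ConditionallyCompleteLinearOrder α]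
    {U : Set α} (hU : IsUpperSet U) (hne : U.Nonempty) (hbdd : BddBelow U) :
    U = Ici (sInf U) ∨ U = Ioi (sInf U) := by
  by_cases hmem : sInf U ∈ U
  · exact Or.inl <| (hU.Ici_subset hmem).antisymm' fun t ht => csInf_le hbdd ht
  · refine Or.inr <| Subset.antisymm (fun t ht => ?_) fun t ht => ?_
    · exact (csInf_le hbdd ht).lt_of_ne fun h => hmem (h ▸ ht)
    · obtain ⟨u, hu, hut⟩ := exists_lt_of_csInf_lt hne ht
      exact hU hut.le hu

section LayerCake

variable {α E : Type*} [MeasurableSpace α] {μ : Measure α}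
  [NormedAddCommGroup E] [NormedSpace ℝ E] [CompleteSpace E]
  {ψ : α → ℝ} {g : α → E}

theorem integral_smul_eq_integral_setIntegral_lt_of_sFinite [SFinite μ] (hψ : Measurable ψ)
    (hψ0 : ∀ y, 0 ≤ ψ y) (hψ1 : ∀ y, ψ y ≤ 1) (hg : Integrable g μ) :
    ∫ y, ψ y • g y ∂μ = ∫ s in Ioo 0 1, ∫ y in {y | s < ψ y}, g y ∂μ := by
  set W : Set (α × ℝ) := {p | p.2 < ψ p.1}
  have hW : MeasurableSet W := measurableSet_lt measurable_snd (hψ.comp measurable_fst)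
  have hint : Integrable (W.indicator fun p => g p.1) (μ.prod (volume.restrict (Ioo 0 1))) :=
    (hg.comp_fst _).indicator hW
  have hfiber (y : α) : ∫ s in Ioo 0 1, W.indicator (fun p => g p.1) (y, s) = ψ y • g y := by
    have hIio :
        (fun s => W.indicator (fun p => g p.1) (y, s)) = (Iio (ψ y)).indicator fun _ => g y := by
      ext s; simp only [W, indicator_apply, mem_ofPred_eq, mem_Iio]
    rw [hIio, integral_indicator_const _ measurableSet_Iio,
      measureReal_restrict_apply measurableSet_Iio,
      Iio_inter_Ioo, min_eq_left (hψ1 y), Real.volume_real_Ioo_of_le (hψ0 y), sub_zero]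
  have hslice (s : ℝ) :
      ∫ y, W.indicator (fun p => g p.1) (y, s) ∂μ = ∫ y in {y | s < ψ y}, g y ∂μ := by
    rw [← integral_indicator (measurableSet_lt measurable_const hψ)]
    rfl
  simp_rw [← hfiber,
    integral_integral_swap (f := fun y s => W.indicator (fun p => g p.1) (y, s)) hint, hslice]

theorem integral_smul_eq_integral_setIntegral_lt (hψ : Measurable ψ)
    (hψ0 : ∀ y, 0 ≤ ψ y) (hψ1 : ∀ y, ψ y ≤ 1) (hg : Integrable g μ) :
    ∫ y, ψ y • g y ∂μ = ∫ s in Ioo 0 1, ∫ y in {y | s < ψ y}, g y ∂μ := by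
  -- `g` vanishes a.e. off a set `t` on which `μ` is σ-finite, so Fubini applies to `μ.restrict t`.
  obtain ⟨t, ht, hgt, hσ⟩ := hg.aefinStronglyMeasurable.exists_set_sigmaFinite
  have hsupp (h : α → E) (hh : ∀ y, g y = 0 → h y = 0) : ∫ y in t, h y ∂μ = ∫ y, h y ∂μ :=
    setIntegral_eq_integral_of_ae_compl_eq_zero <|
      ((ae_restrict_iff' ht.compl).1 hgt).mono fun y hy hyt => hh y (hy hyt)
  calc ∫ y, ψ y • g y ∂μ = ∫ y in t, ψ y • g y ∂μ := (hsupp _ fun y hy => by simp [hy]).symm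
    _ = ∫ s in Ioo 0 1, ∫ y in {y | s < ψ y}, g y ∂μ.restrict t :=
      integral_smul_eq_integral_setIntegral_lt_of_sFinite hψ hψ0 hψ1 hg.restrict
    _ = ∫ s in Ioo 0 1, ∫ y in {y | s < ψ y}, g y ∂μ := by
      congr 1; ext s
      have hA : MeasurableSet {y | s < ψ y} := measurableSet_lt measurable_const hψ
      rw [← integral_indicator hA, ← integral_indicator hA, hsupp _ fun y hy => by simp [hy]]

theorem norm_integral_smul_le_of_norm_setIntegral_lt_le (hψ : Measurable ψ)
    (hψ0 : ∀ y, 0 ≤ ψ y) (hψ1 : ∀ y, ψ y ≤ 1) (hg : Integrable g μ) {C : ℝ}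
    (hC : ∀ s ∈ Ioo (0 : ℝ) 1, ‖∫ y in {y | s < ψ y}, g y ∂μ‖ ≤ C) :
    ‖∫ y, ψ y • g y ∂μ‖ ≤ C := by
  rw [integral_smul_eq_integral_setIntegral_lt hψ hψ0 hψ1 hg]
  simpa using norm_setIntegral_le_of_norm_le_const (measure_Ioo_lt_top (μ := volume)) hC

end LayerCake

section Tails

variable {α E : Type*} [MeasurableSpace α] {μ : Measure α}
  [NormedAddCommGroup E] [NormedSpace ℝ E] {d : α → ℝ} {g : α → E} {R B : ℝ}

theorem norm_setIntegral_preimage_Ici_le (hd : Measurable d) {c : ℝ} (hRc : R < c)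
    (hg : IntegrableOn g (d ⁻¹' Ioi R) μ)
    (hB : ∀ r ∈ Ioo R c, ‖∫ y in d ⁻¹' Ioi r, g y ∂μ‖ ≤ B) :
    ‖∫ y in d ⁻¹' Ici c, g y ∂μ‖ ≤ B := by
  obtain ⟨u, hu_mono, hu_mem, hu_lim⟩ := exists_seq_strictMono_tendsto' hRc
  have hInter : ⋂ n, d ⁻¹' Ioi (u n) = d ⁻¹' Ici c := by
    ext y
    simp only [mem_iInter, mem_preimage, mem_Ioi, mem_Ici]
    exact ⟨fun h => le_of_tendsto' hu_lim fun n => (h n).le, fun h n => (hu_mem n).2.trans_le h⟩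
  have hlim := tendsto_setIntegral_of_antitone (μ := μ) (f := g) (fun n => hd measurableSet_Ioi)
    (fun m n hmn => preimage_mono (Ioi_subset_Ioi (hu_mono.monotone hmn)))
    ⟨0, hg.mono_set (preimage_mono (Ioi_subset_Ioi (hu_mem 0).1.le))⟩
  rw [hInter] at hlim
  exact le_of_tendsto' hlim.norm fun n => hB _ (hu_mem n)

variable (hd : Measurable d) (hg : IntegrableOn g (d ⁻¹' Ioi R) μ)
  (hB : ∀ r, R ≤ r → ‖∫ y in d ⁻¹' Ioi r, g y ∂μ‖ ≤ B)
include hd hg hB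

theorem norm_setIntegral_preimage_of_isUpperSet_le {U : Set ℝ} (hU : IsUpperSet U)
    (hUR : U ⊆ Ioi R) : ‖∫ y in d ⁻¹' U, g y ∂μ‖ ≤ B := by
  obtain rfl | hne := U.eq_empty_or_nonempty
  · simpa using (norm_nonneg _).trans (hB R le_rfl)
  have hRU : R ≤ sInf U := le_csInf hne fun t ht => (hUR ht).le
  rcases hU.eq_Ici_or_eq_Ioi_csInf hne ⟨R, fun t ht => (hUR ht).le⟩ with hIci | hIoi
  · have hRc : R < sInf U := hUR (hIci.ge self_mem_Ici)
    rw [hIci]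
    exact norm_setIntegral_preimage_Ici_le hd hRc hg fun r hr => hB r hr.1.le
  · rw [hIoi]
    exact hB _ hRU

theorem norm_setIntegral_inter_preimage_antitone_lt_le {φ : ℝ → ℝ} (hφ : Antitone φ) (s : ℝ) :
    ‖∫ y in {y | s < φ (d y)} ∩ d ⁻¹' Ioi R, g y ∂μ‖ ≤ 2 * B := by
  set U : Set ℝ := Ioi R ∩ {t | φ t ≤ s}
  have hU : IsUpperSet U := (isUpperSet_Ioi (a := R)).inter fun a b hab ha => (hφ hab).trans ha
  have hdiff : {y | s < φ (d y)} ∩ d ⁻¹' Ioi R = d ⁻¹' Ioi R \ d ⁻¹' U := by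
    ext y
    simp only [U, mem_inter_iff, Set.mem_sdiff, mem_preimage, mem_Ioi, mem_ofPred_eq, not_and,
      not_le]
    tauto
  rw [hdiff, setIntegral_sdiff (hd (measurableSet_Ioi.inter (measurableSet_le hφ.measurable
    measurable_const))) hg (preimage_mono inter_subset_left), two_mul]
  exact (norm_sub_le _ _).trans <| add_le_add (hB R le_rfl)
    (norm_setIntegral_preimage_of_isUpperSet_le hd hg hB hU inter_subset_left)

end Tails

theorem blanket_lemma_general
    (μ : Measure ℂ) (b : ℂ → ℂ → ℂ) (f : ℂ → ℂ) (x : ℂ)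
    (φ : ℝ → ℝ) (hφanti : Antitone φ) (hφ0 : ∀ t, 0 ≤ φ t) (hφ1 : ∀ t, φ t ≤ 1)
    (R : ℝ) (hR : 0 < R)
    (hint : ∀ r > (0:ℝ), IntegrableOn (fun y => b x y * f y) {y : ℂ | r < dist y x} μ)
    (Bstar : ℝ)
    (hBstar : ∀ r > (0:ℝ), ‖∫ y in {y : ℂ | r < dist y x}, b x y * f y ∂μ‖ ≤ Bstar)
    (Mf : ℝ)
    (hMf : ∀ r > R, (∫ y in closedBall x r, ‖f y‖ ∂μ) / r ≤ Mf) :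
    ‖∫ y in {y : ℂ | R < dist y x}, b x y * φ (dist x y) * f y ∂μ‖ ≤
      2 * Bstar + 2 * Mf := by
  have hd : Measurable fun y : ℂ => dist y x := measurable_id.dist measurable_const
  have hψ : Measurable fun y : ℂ => φ (dist y x) := hφanti.measurable.comp hd
  have hMf_nonneg : 0 ≤ Mf :=
    (div_nonneg (integral_nonneg fun _ => norm_nonneg _) (by linarith)).trans
      (hMf (R + 1) (by linarith))
  have hweight : (fun y => b x y * φ (dist x y) * f y) = fun y => φ (dist y x) • (b x y * f y) := by
    ext y
    rw [dist_comm, Complex.real_smul]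
    ring
  have hlevel : ∀ s ∈ Ioo (0 : ℝ) 1,
      ‖∫ y in {y | s < φ (dist y x)}, b x y * f y ∂μ.restrict {y | R < dist y x}‖ ≤ 2 * Bstar :=
    fun s _ => by
      rw [Measure.restrict_restrict
        (measurableSet_lt measurable_const hψ : MeasurableSet {y | s < φ (dist y x)})]
      exact norm_setIntegral_inter_preimage_antitone_lt_le hd (hint R hR)
        (fun r hr => hBstar r (hR.trans_le hr)) hφanti s
  rw [hweight]
  calc _ ≤ 2 * Bstar := norm_integral_smul_le_of_norm_setIntegral_lt_le
          hψ (fun _ => hφ0 _) (fun _ => hφ1 _) (hint R hR) hlevel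
    _ ≤ 2 * Bstar + 2 * Mf := by linarith

/-- Blanket Lemma: let `b(x,y)` be a kernel with `|b(x,y)| ≤ 1/|x−y|`, let
`(b*f)(x) := sup_{r>0} |∫_{|y−x|>r} b(x,y) f(y) dμ|` and
`(M_{1,R} f)(x) := sup_{r>R} (1/r) ∫_{B(x,r)} |f| dμ`. Then for every `R > 0` and every
decreasing `φ : [0,∞) → [0,1]`,
`|∫_{|y−x|>R} b(x,y) φ(|x−y|) f(y) dμ| ≤ 2 (b*f)(x) + 2 (M_{1,R} f)(x)`.
Here the maximal quantities are expressed through arbitrary upper bounds `Bstar, Mf`. -/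
theorem blanket_lemma
    (μ : Measure ℂ) (b : ℂ → ℂ → ℂ) (f : ℂ → ℂ) (x : ℂ)
    (hb : ∀ z y : ℂ, z ≠ y → ‖b z y‖ ≤ 1 / ‖z - y‖)
    (φ : ℝ → ℝ) (hφanti : Antitone φ) (hφ0 : ∀ t, 0 ≤ φ t) (hφ1 : ∀ t, φ t ≤ 1)
    (R : ℝ) (hR : 0 < R)
    (hint : ∀ r > (0:ℝ), IntegrableOn (fun y => b x y * f y) {y : ℂ | r < dist y x} μ)
    (hintφ : IntegrableOn (fun y => b x y * φ (dist x y) * f y) {y : ℂ | R < dist y x} μ)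
    (Bstar : ℝ)
    (hBstar : ∀ r > (0:ℝ), ‖∫ y in {y : ℂ | r < dist y x}, b x y * f y ∂μ‖ ≤ Bstar)
    (Mf : ℝ)
    (hMf : ∀ r > R, (∫ y in closedBall x r, ‖f y‖ ∂μ) / r ≤ Mf) :
    ‖∫ y in {y : ℂ | R < dist y x}, b x y * φ (dist x y) * f y ∂μ‖ ≤
      2 * Bstar + 2 * Mf :=
  blanket_lemma_general μ b f x φ hφanti hφ0 hφ1 R hR hint Bstar hBstar Mf hMf
end

section
/- Hölder-type smoothness of the suppressed kernel difference: if Φ is a nonnegative 1-Lipschitz function on ℂ and |x − x'| ≤ (1/2)|x − y|, then |k_Φ(x,y) − k_Φ(x',y)| ≤ 16 |x − x'| / |x − y|², where k_Φ(x,y) = conj(x−y)/(|x−y|² + Φ(x)Φ(y)). -/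
open Complex

/-!
Writing `D = ‖x - y‖² + Φ x Φ y` and `D'` for the same quantity at `x'`, the kernel difference is
`conj (x - x') / D + conj (x' - y) (D' - D) / (D D')`. The first term is at most `‖x - x'‖ / D`.
For the second, `|D' - D| ≤ ‖x - x'‖ (‖x - y‖ + ‖x' - y‖ + Φ y)`, and the only danger is a large
`Φ y`; but then `Φ x'` is large too, and `Φ y ‖x' - y‖ ≤ D'` absorbs it.
-/

noncomputable def suppressedDenom (Φ : ℂ → ℝ) (x y : ℂ) : ℝ :=
  ‖x - y‖ ^ 2 + Φ x * Φ y

noncomputable def suppressedKernel (Φ : ℂ → ℝ) (x y : ℂ) : ℂ :=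
  starRingEnd ℂ (x - y) / (suppressedDenom Φ x y : ℂ)

theorem norm_div_ofReal_sub_div_ofReal_le {𝕜 : Type*} [RCLike 𝕜] (v w : 𝕜) {D D' : ℝ}
    (hD : 0 < D) (hD' : 0 < D') :
    ‖v / (D : 𝕜) - w / (D' : 𝕜)‖ ≤ ‖v - w‖ / D + ‖w‖ * |D' - D| / (D * D') := by
  have hD₀ : (D : 𝕜) ≠ 0 := RCLike.ofReal_ne_zero.mpr hD.ne'
  have hD'₀ : (D' : 𝕜) ≠ 0 := RCLike.ofReal_ne_zero.mpr hD'.ne'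
  have hsplit : v / (D : 𝕜) - w / (D' : 𝕜) =
      (v - w) / (D : 𝕜) + w * ((D' - D : ℝ) : 𝕜) / ((D * D' : ℝ) : 𝕜) := by
    push_cast
    field_simp
    ring
  rw [hsplit]
  refine (norm_add_le _ _).trans_eq ?_
  rw [norm_div, norm_div, norm_mul, RCLike.norm_ofReal, RCLike.norm_ofReal, RCLike.norm_ofReal,
    abs_of_pos hD, abs_of_pos (mul_pos hD hD')]

section SuppressedDenom

variable {Φ : ℂ → ℝ} {x x' y : ℂ}

theorem sq_norm_le_suppressedDenom (hx : 0 ≤ Φ x) (hy : 0 ≤ Φ y) :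
    ‖x - y‖ ^ 2 ≤ suppressedDenom Φ x y :=
  le_add_of_nonneg_right (mul_nonneg hx hy)

theorem suppressedDenom_pos (hx : 0 ≤ Φ x) (hy : 0 ≤ Φ y) (hxy : y ≠ x) :
    0 < suppressedDenom Φ x y :=
  (pow_pos (norm_pos_iff.mpr (sub_ne_zero.mpr hxy.symm)) 2).trans_le
    (sq_norm_le_suppressedDenom hx hy)

theorem mul_norm_le_suppressedDenom (hy : 0 ≤ Φ y) (hlip : Φ y - Φ x ≤ ‖x - y‖) :
    Φ y * ‖x - y‖ ≤ suppressedDenom Φ x y := by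
  unfold suppressedDenom
  nlinarith [sq_nonneg (‖x - y‖ - Φ y), mul_le_mul_of_nonneg_right (sub_le_comm.mp hlip) hy]

theorem abs_suppressedDenom_sub_le (hy : 0 ≤ Φ y) (hlip : |Φ x' - Φ x| ≤ ‖x - x'‖) :
    |suppressedDenom Φ x' y - suppressedDenom Φ x y| ≤
      ‖x - x'‖ * (‖x - y‖ + ‖x' - y‖ + Φ y) := by
  have hnorm : |‖x' - y‖ - ‖x - y‖| ≤ ‖x - x'‖ := by
    simpa [norm_sub_rev x x'] using abs_norm_sub_norm_le (x' - y) (x - y)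
  calc |suppressedDenom Φ x' y - suppressedDenom Φ x y|
      = |(‖x' - y‖ - ‖x - y‖) * (‖x - y‖ + ‖x' - y‖) + (Φ x' - Φ x) * Φ y| := by
        unfold suppressedDenom; ring_nf
    _ ≤ |‖x' - y‖ - ‖x - y‖| * (‖x - y‖ + ‖x' - y‖) + |Φ x' - Φ x| * Φ y := by
        refine (abs_add_le _ _).trans_eq ?_
        rw [abs_mul, abs_mul, abs_of_nonneg hy,
          abs_of_nonneg (add_nonneg (norm_nonneg (x - y)) (norm_nonneg (x' - y)))]
    _ ≤ ‖x - x'‖ * (‖x - y‖ + ‖x' - y‖) + ‖x - x'‖ * Φ y := by gcongr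
    _ = ‖x - x'‖ * (‖x - y‖ + ‖x' - y‖ + Φ y) := by ring

theorem norm_mul_abs_suppressedDenom_sub_mul_sq_le (hx : 0 ≤ Φ x) (hx' : 0 ≤ Φ x')
    (hy : 0 ≤ Φ y) (hlip : |Φ x' - Φ x| ≤ ‖x - x'‖) (hlipy : Φ y - Φ x' ≤ ‖x' - y‖)
    (hfar : ‖x - y‖ ≤ 2 * ‖x' - y‖) :
    ‖x' - y‖ * |suppressedDenom Φ x' y - suppressedDenom Φ x y| * ‖x - y‖ ^ 2 ≤
      4 * ‖x - x'‖ * (suppressedDenom Φ x y * suppressedDenom Φ x' y) := by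
  have hD := sq_norm_le_suppressedDenom hx hy
  have hD' := sq_norm_le_suppressedDenom hx' hy
  have hΦy := mul_norm_le_suppressedDenom hy hlipy
  have hdiff := abs_suppressedDenom_sub_le hy hlip
  set a := ‖x - y‖
  set a' := ‖x' - y‖
  set t := ‖x - x'‖
  set D := suppressedDenom Φ x y
  set D' := suppressedDenom Φ x' y
  have hD'₀ : 0 ≤ D' := (sq_nonneg a').trans hD'
  have hfar' : a ^ 2 * a' * (a + a') ≤ 3 * (a ^ 2 * a' ^ 2) := by
    nlinarith [mul_le_mul_of_nonneg_left hfar (by positivity : 0 ≤ a ^ 2 * a')]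
  calc a' * |D' - D| * a ^ 2 ≤ t * (a ^ 2 * a' * (a + a') + a ^ 2 * (Φ y * a')) := by
        nlinarith [mul_le_mul_of_nonneg_left hdiff (by positivity : 0 ≤ a' * a ^ 2)]
    _ ≤ t * (3 * (a ^ 2 * a' ^ 2) + a ^ 2 * D') := by gcongr
    _ ≤ t * (4 * (D * D')) := by
        gcongr
        linarith [mul_le_mul hD hD' (sq_nonneg a') ((sq_nonneg a).trans hD),
          mul_le_mul_of_nonneg_right hD hD'₀]
    _ = 4 * t * (D * D') := by ring

end SuppressedDenom

theorem norm_suppressedKernel_sub_le {Φ : ℂ → ℝ} (hΦ0 : ∀ x, 0 ≤ Φ x) {x x' y : ℂ}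
    (hxy : y ≠ x) (hx'y : y ≠ x') :
    ‖suppressedKernel Φ x y - suppressedKernel Φ x' y‖ ≤
      ‖x - x'‖ / suppressedDenom Φ x y + ‖x' - y‖ *
        |suppressedDenom Φ x' y - suppressedDenom Φ x y| /
          (suppressedDenom Φ x y * suppressedDenom Φ x' y) := by
  have h := norm_div_ofReal_sub_div_ofReal_le (starRingEnd ℂ (x - y)) (starRingEnd ℂ (x' - y))
    (suppressedDenom_pos (hΦ0 x) (hΦ0 y) hxy) (suppressedDenom_pos (hΦ0 x') (hΦ0 y) hx'y)
  rwa [← map_sub, norm_conj, norm_conj, sub_sub_sub_cancel_right] at h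

/-- Hölder-type smoothness of the suppressed kernel: if `Φ` is a nonnegative 1-Lipschitz
function on `ℂ` and `|x − x'| ≤ (1/2)|x − y|`, then
`|k_Φ(x,y) − k_Φ(x',y)| ≤ 16 |x − x'| / |x − y|²`. -/
theorem suppressed_kernel_smoothness
    (Φ : ℂ → ℝ) (hΦ0 : ∀ x, 0 ≤ Φ x)
    (hΦlip : ∀ x y : ℂ, |Φ x - Φ y| ≤ ‖x - y‖)
    (x x' y : ℂ) (hxy : y ≠ x) (hx'y : y ≠ x')
    (hclose : ‖x - x'‖ ≤ ‖x - y‖ / 2) :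
    ‖(starRingEnd ℂ) (x - y) / ((‖x - y‖ ^ 2 + Φ x * Φ y : ℝ) : ℂ) -
         (starRingEnd ℂ) (x' - y) / ((‖x' - y‖ ^ 2 + Φ x' * Φ y : ℝ) : ℂ)‖ ≤
      16 * ‖x - x'‖ / ‖x - y‖ ^ 2 := by
  change ‖suppressedKernel Φ x y - suppressedKernel Φ x' y‖ ≤ _
  refine (norm_suppressedKernel_sub_le hΦ0 hxy hx'y).trans ?_
  have ha : 0 < ‖x - y‖ := norm_pos_iff.mpr (sub_ne_zero.mpr hxy.symm)
  have hfar : ‖x - y‖ ≤ 2 * ‖x' - y‖ := by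
    linarith [norm_sub_le_norm_sub_add_norm_sub x x' y]
  have hD := suppressedDenom_pos (hΦ0 x) (hΦ0 y) hxy
  have hD' := suppressedDenom_pos (hΦ0 x') (hΦ0 y) hx'y
  have hsecond : ‖x' - y‖ * |suppressedDenom Φ x' y - suppressedDenom Φ x y| /
      (suppressedDenom Φ x y * suppressedDenom Φ x' y) ≤ 4 * ‖x - x'‖ / ‖x - y‖ ^ 2 := by
    rw [div_le_div_iff₀ (mul_pos hD hD') (by positivity)]
    exact norm_mul_abs_suppressedDenom_sub_mul_sq_le (hΦ0 x) (hΦ0 x') (hΦ0 y)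
      (norm_sub_rev x x' ▸ hΦlip x' x) (norm_sub_rev y x' ▸ le_of_abs_le (hΦlip y x')) hfar
  calc _ ≤ ‖x - x'‖ / ‖x - y‖ ^ 2 + 4 * ‖x - x'‖ / ‖x - y‖ ^ 2 :=
        add_le_add (div_le_div_of_nonneg_left (norm_nonneg _) (by positivity)
          (sq_norm_le_suppressedDenom (hΦ0 x) (hΦ0 y))) hsecond
    _ ≤ 16 * ‖x - x'‖ / ‖x - y‖ ^ 2 := by
      rw [← add_div]; gcongr; linarith [norm_nonneg (x - x')]
end

section
/- Comparison of Cauchy kernel and suppressed kernel: for a nonnegative 1-Lipschitz function Φ on ℂ and x ≠ y, |1/(x−y) − conj(x−y)/(|x−y|² + Φ(x)Φ(y))| ≤ Φ(x)(Φ(x) + |x−y|)/|x−y|³. -/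
open scoped ComplexConjugate

namespace Complex

theorem inv_sub_conj_div_ofReal_norm_sq_add (z : ℂ) (a : ℝ) :
    z⁻¹ - conj z / ((‖z‖ ^ 2 + a : ℝ) : ℂ) =
      conj z * (((‖z‖ ^ 2)⁻¹ - (‖z‖ ^ 2 + a)⁻¹ : ℝ) : ℂ) := by
  rw [inv_def, normSq_eq_norm_sq]
  push_cast
  ring

theorem norm_inv_sub_conj_div_ofReal_norm_sq_add (z : ℂ) {a : ℝ} (ha : 0 ≤ a) :
    ‖z⁻¹ - conj z / ((‖z‖ ^ 2 + a : ℝ) : ℂ)‖ = a / (‖z‖ * (‖z‖ ^ 2 + a)) := by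
  -- at z = 0 both sides vanish through the junk values 0⁻¹ = 0 and a / 0 = 0
  rcases eq_or_ne z 0 with rfl | hz
  · simp
  have hd : 0 < ‖z‖ := norm_pos_iff.mpr hz
  have hsub : (‖z‖ ^ 2 + a)⁻¹ ≤ (‖z‖ ^ 2)⁻¹ := by gcongr; linarith
  rw [inv_sub_conj_div_ofReal_norm_sq_add, norm_mul, norm_conj, norm_real, Real.norm_eq_abs,
    abs_of_nonneg (sub_nonneg.mpr hsub)]
  field_simp
  ring

theorem norm_inv_sub_conj_div_ofReal_norm_sq_add_le (z : ℂ) {a : ℝ} (ha : 0 ≤ a) :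
    ‖z⁻¹ - conj z / ((‖z‖ ^ 2 + a : ℝ) : ℂ)‖ ≤ a / ‖z‖ ^ 3 := by
  rw [norm_inv_sub_conj_div_ofReal_norm_sq_add z ha]
  rcases (norm_nonneg z).eq_or_lt with hd | hd
  · simp [← hd]
  rw [show ‖z‖ ^ 3 = ‖z‖ * ‖z‖ ^ 2 by ring]
  gcongr
  linarith

end Complex

theorem cauchy_vs_suppressed_kernel_general
    (Φ : ℂ → ℝ) (hΦ0 : ∀ x, 0 ≤ Φ x)
    (hΦlip : ∀ x y : ℂ, |Φ x - Φ y| ≤ ‖x - y‖)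
    (x y : ℂ) :
    ‖(1 / (x - y) -
         (starRingEnd ℂ) (x - y) / (((‖x - y‖) ^ 2 + Φ x * Φ y : ℝ) : ℂ))‖ ≤
      Φ x * (Φ x + ‖x - y‖) / (‖x - y‖) ^ 3 := by
  have hΦy : Φ y ≤ Φ x + ‖x - y‖ := by
    linarith [neg_abs_le (Φ x - Φ y), hΦlip x y]
  rw [one_div]
  calc _ ≤ Φ x * Φ y / ‖x - y‖ ^ 3 :=
        Complex.norm_inv_sub_conj_div_ofReal_norm_sq_add_le _ (mul_nonneg (hΦ0 x) (hΦ0 y))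
    _ ≤ Φ x * (Φ x + ‖x - y‖) / ‖x - y‖ ^ 3 := by
        gcongr
        exact hΦ0 x

/-- Comparison of the Cauchy kernel and the suppressed kernel: for a nonnegative
1-Lipschitz function `Φ` on `ℂ` and `x ≠ y`,
`|1/(x−y) − conj(x−y)/(|x−y|² + Φ(x)Φ(y))| ≤ Φ(x)(Φ(x) + |x−y|)/|x−y|³`. -/
theorem cauchy_vs_suppressed_kernel
    (Φ : ℂ → ℝ) (hΦ0 : ∀ x, 0 ≤ Φ x)
    (hΦlip : ∀ x y : ℂ, |Φ x - Φ y| ≤ ‖x - y‖)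
    (x y : ℂ) (hxy : x ≠ y) :
    ‖(1 / (x - y) -
         (starRingEnd ℂ) (x - y) / (((‖x - y‖) ^ 2 + Φ x * Φ y : ℝ) : ℂ))‖ ≤
      Φ x * (Φ x + ‖x - y‖) / (‖x - y‖) ^ 3 :=
  cauchy_vs_suppressed_kernel_general Φ hΦ0 hΦlip x y
end

section
/- Consequence of the Riesz-system property: under the same assumptions, for every φ, ψ ∈ H and every subfamily ℱ ⊆ I with ‖Δ_Q φ‖ > 0 for Q ∈ ℱ, one has Σ_{Q∈ℱ} |⟨Δ_Q φ, ψ⟩|² / ‖Δ_Q φ‖² ≤ 2 ‖ψ‖². -/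
open scoped InnerProductSpace

/-- Consequence of the Riesz-system property: under the assumptions of the Riesz system
(`ΛΔ_Q = Δ_QΛ = 0`, `Δ_QΔ_R = 0` for `Q ≠ R`, `φ = Λφ + Σ_Q Δ_Qφ`, and
`(1/2)‖φ‖² ≤ ‖Λφ‖² + Σ_Q ‖Δ_Qφ‖² ≤ 2‖φ‖²`), for every `φ, ψ ∈ H` and every subfamily
`ℱ ⊆ I` with `‖Δ_Qφ‖ > 0` on `ℱ`, one has
`Σ_{Q∈ℱ} |⟨Δ_Qφ, ψ⟩|²/‖Δ_Qφ‖² ≤ 2‖ψ‖²`. -/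
theorem riesz_system_dual_bound
    {H : Type*} [NormedAddCommGroup H] [InnerProductSpace ℂ H] [CompleteSpace H]
    {I : Type*} (Λ : H →L[ℂ] H) (Δ : I → H →L[ℂ] H)
    (hΛidem : Λ ∘L Λ = Λ) (hΔidem : ∀ Q, Δ Q ∘L Δ Q = Δ Q)
    (hΛΔ : ∀ Q, Λ ∘L Δ Q = 0) (hΔΛ : ∀ Q, Δ Q ∘L Λ = 0)
    (hΔΔ : ∀ Q R, Q ≠ R → Δ Q ∘L Δ R = 0)
    (hdecomp : ∀ φ : H, HasSum (fun Q => Δ Q φ) (φ - Λ φ))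
    (hriesz_lower : ∀ φ : H, (1/2) * ‖φ‖^2 ≤ ‖Λ φ‖^2 + ∑' Q, ‖Δ Q φ‖^2)
    (hriesz_upper : ∀ φ : H, ‖Λ φ‖^2 + ∑' Q, ‖Δ Q φ‖^2 ≤ 2 * ‖φ‖^2)
    (φ ψ : H) (F : Set I) (hF : ∀ Q ∈ F, 0 < ‖Δ Q φ‖) :
    ∑' Q : F, ‖⟪Δ (Q : I) φ, ψ⟫_ℂ‖^2 / ‖Δ (Q : I) φ‖^2 ≤ 2 * ‖ψ‖^2 := by
  have key : ∀ s : Finset F,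
      ∑ Q ∈ s, ‖⟪Δ (Q : I) φ, ψ⟫_ℂ‖^2 / ‖Δ (Q : I) φ‖^2 ≤ 2 * ‖ψ‖^2 := by
    intro s
    classical
    set a : I → ℂ := fun Q => ⟪Δ Q φ, ψ⟫_ℂ with ha
    set c : I → ℂ := fun Q => a Q / ((‖Δ Q φ‖ : ℂ)^2) with hc
    set t : Finset I := s.image Subtype.val with htdef
    have htF : ∀ Q ∈ t, Q ∈ F := by
      intro Q hQ
      simp only [htdef, Finset.mem_image] at hQ
      rcases hQ with ⟨⟨Q', hQ'⟩, _, rfl⟩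
      exact hQ'
    set T : ℝ := ∑ Q ∈ t, ‖a Q‖^2 / ‖Δ Q φ‖^2 with hT
    have hsum_eq : ∑ Q ∈ s, ‖⟪Δ (Q : I) φ, ψ⟫_ℂ‖^2 / ‖Δ (Q : I) φ‖^2 = T := by
      rw [hT, htdef, Finset.sum_image (fun x _ y _ h => Subtype.ext h)]
    rw [hsum_eq]
    set η : H := ∑ Q ∈ t, c Q • Δ Q φ with hη
    have hΔη : ∀ R : I, Δ R η = if R ∈ t then c R • Δ R φ else 0 := by
      intro R
      rw [hη, map_sum]
      have : ∀ Q ∈ t, Δ R (c Q • Δ Q φ) = if Q = R then c R • Δ R φ else 0 := by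
        intro Q hQ
        rw [map_smul]
        by_cases h : Q = R
        · subst h
          have := congrArg (fun f => f φ) (hΔidem Q)
          simp only [ContinuousLinearMap.comp_apply] at this
          simp [this]
        · have := congrArg (fun f => f φ) (hΔΔ R Q (Ne.symm h))
          simp only [ContinuousLinearMap.comp_apply] at this
          simp [this, h]
      rw [Finset.sum_congr rfl this]
      by_cases hR : R ∈ t
      · rw [Finset.sum_ite_eq' t R (fun _ => c R • Δ R φ)] <;> simp [hR]
      · rw [Finset.sum_ite_eq' t R (fun _ => c R • Δ R φ)] <;> simp [hR]
    have hΛη : Λ η = 0 := by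
      rw [hη, map_sum]
      apply Finset.sum_eq_zero
      intro Q hQ
      rw [map_smul]
      have := congrArg (fun f => f φ) (hΛΔ Q)
      simp only [ContinuousLinearMap.comp_apply] at this
      simp [this]
    -- tsum of ‖Δ R η‖² equals T
    have htsum : ∑' R, ‖Δ R η‖^2 = T := by
      rw [tsum_eq_sum (s := t) (by intro b hb; rw [hΔη b, if_neg hb]; simp)]
      rw [hT]
      apply Finset.sum_congr rfl
      intro Q hQ
      rw [hΔη Q, if_pos hQ, norm_smul, mul_pow]
      have hn : 0 < ‖Δ Q φ‖ := hF Q (htF Q hQ)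
      have hcn : ‖c Q‖ = ‖a Q‖ / ‖Δ Q φ‖^2 := by
        rw [hc]
        simp [norm_div, norm_pow, Complex.norm_real, abs_of_nonneg hn.le]
      rw [hcn]
      field_simp
    have hTnn : 0 ≤ T := by
      rw [hT]; positivity
    -- inner product of η with ψ equals T
    have hinner : ⟪η, ψ⟫_ℂ = (T : ℂ) := by
      rw [hη, sum_inner, hT]
      push_cast
      apply Finset.sum_congr rfl
      intro Q hQ
      rw [inner_smul_left]
      have hn : (0:ℝ) < ‖Δ Q φ‖ := hF Q (htF Q hQ)
      have : (starRingEnd ℂ) (c Q) = (starRingEnd ℂ) (a Q) / ((‖Δ Q φ‖ : ℂ)^2) := by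
        rw [hc]; simp [map_div₀]
      rw [this, div_mul_eq_mul_div, RCLike.conj_mul]
      norm_cast
      exact (Complex.ofReal_div _ _).symm
    -- lower Riesz bound on η
    have h1 := hriesz_lower η
    rw [hΛη, htsum] at h1
    simp only [norm_zero] at h1
    have hηT : ‖η‖^2 ≤ 2 * T := by nlinarith
    have hTle : T ≤ ‖η‖ * ‖ψ‖ := by
      calc T = Complex.re ⟪η, ψ⟫_ℂ := by rw [hinner]; simp
        _ ≤ ‖⟪η, ψ⟫_ℂ‖ := Complex.re_le_norm _
        _ ≤ ‖η‖ * ‖ψ‖ := norm_inner_le_norm η ψ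
    by_cases hT0 : T = 0
    · rw [hT0]; positivity
    · have hTpos : 0 < T := lt_of_le_of_ne hTnn (Ne.symm hT0)
      nlinarith [norm_nonneg η, norm_nonneg ψ, sq_nonneg (‖η‖ - ‖ψ‖)]
  exact tsum_le_of_sum_le' (by positivity) key
end

section
/- Expected bad part is small: Let 𝒟₂ be a random dyadic lattice and 𝒟₁ a fixed lattice with projections {Δ_{Q}}_{Q∈𝒟₁} satisfying the two-sided Riesz bounds (1/2)‖φ‖² ≤ ‖Λφ‖² + Σ_Q ‖Δ_Q φ‖² ≤ 2‖φ‖². Suppose for each Q ∈ 𝒟₁ the probability P_{𝒟₂}{Q is bad} ≤ δ. Then for every φ ∈ L²(μ) not depending on 𝒟₂, E_{𝒟₂} ‖ Σ_{Q bad} Δ_Q φ ‖²_{L²(μ)} ≤ 4 δ ‖φ‖²_{L²(μ)}. -/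
open scoped Classical

open MeasureTheory

/-- Partial sums (over arbitrary finsets) of a summable family are uniformly bounded. -/
lemma summable_partial_sums_bounded {H : Type*} [NormedAddCommGroup H] [CompleteSpace H]
    {I : Type*} {f : I → H} (hf : Summable f) :
    ∃ C : ℝ, ∀ F : Finset I, ‖∑ Q ∈ F, f Q‖ ≤ C := by
  classical
  obtain ⟨F₀, hF₀⟩ := summable_iff_vanishing_norm.mp hf 1 one_pos
  refine ⟨(∑ Q ∈ F₀, ‖f Q‖) + 1, fun F => ?_⟩
  have hsplit : ∑ Q ∈ F ∩ F₀, f Q + ∑ Q ∈ F \ F₀, f Q = ∑ Q ∈ F, f Q :=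
    Finset.sum_inter_add_sum_sdiff F F₀ f
  calc ‖∑ Q ∈ F, f Q‖ = ‖∑ Q ∈ F ∩ F₀, f Q + ∑ Q ∈ F \ F₀, f Q‖ := by rw [hsplit]
    _ ≤ ‖∑ Q ∈ F ∩ F₀, f Q‖ + ‖∑ Q ∈ F \ F₀, f Q‖ := norm_add_le _ _
    _ ≤ (∑ Q ∈ F₀, ‖f Q‖) + 1 := by
        gcongr
        · calc ‖∑ Q ∈ F ∩ F₀, f Q‖ ≤ ∑ Q ∈ F ∩ F₀, ‖f Q‖ := norm_sum_le _ _
            _ ≤ ∑ Q ∈ F₀, ‖f Q‖ :=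
              Finset.sum_le_sum_of_subset_of_nonneg (Finset.inter_subset_right)
                (fun _ _ _ => norm_nonneg _)
        · exact le_of_lt (hF₀ _ (Finset.sdiff_disjoint))

/-- Expected bad part is small: if `{Δ_Q}` together with `Λ` form a Riesz system on the
Hilbert space `H = L²(μ)` (abstractly, any Hilbert space), and for each index `Q` the
random event "`Q` is bad" has probability at most `δ`, then for every deterministic `φ`,
`E ‖Σ_{Q bad} Δ_Q φ‖² ≤ 4δ‖φ‖²`. -/
theorem expected_bad_part_small
    {H : Type*} [NormedAddCommGroup H] [InnerProductSpace ℂ H] [CompleteSpace H]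
    {I : Type*} [Countable I] (Λ : H →L[ℂ] H) (Δ : I → H →L[ℂ] H)
    (hΛidem : Λ ∘L Λ = Λ) (hΔidem : ∀ Q, Δ Q ∘L Δ Q = Δ Q)
    (hΛΔ : ∀ Q, Λ ∘L Δ Q = 0) (hΔΛ : ∀ Q, Δ Q ∘L Λ = 0)
    (hΔΔ : ∀ Q R, Q ≠ R → Δ Q ∘L Δ R = 0)
    (hdecomp : ∀ φ : H, HasSum (fun Q => Δ Q φ) (φ - Λ φ))
    (hriesz_lower : ∀ φ : H, (1/2) * ‖φ‖^2 ≤ ‖Λ φ‖^2 + ∑' Q, ‖Δ Q φ‖^2)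
    (hriesz_upper : ∀ φ : H, ‖Λ φ‖^2 + ∑' Q, ‖Δ Q φ‖^2 ≤ 2 * ‖φ‖^2)
    {Ω : Type*} [MeasurableSpace Ω] (P : Measure Ω) [IsProbabilityMeasure P]
    (bad : I → Set Ω) (hbadmeas : ∀ Q, MeasurableSet (bad Q))
    (δ : ℝ) (hδ : 0 ≤ δ) (hbadprob : ∀ Q, P (bad Q) ≤ ENNReal.ofReal δ)
    (φ : H) :
    ∫ ω, ‖∑' Q, (if ω ∈ bad Q then Δ Q φ else 0)‖^2 ∂P ≤ 4 * δ * ‖φ‖^2 := by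
  classical
  set c : I → ℝ := fun Q => ‖Δ Q φ‖^2 with hc
  have hc_nonneg : ∀ Q, 0 ≤ c Q := fun Q => sq_nonneg _
  have hsum : Summable (fun Q => Δ Q φ) := (hdecomp φ).summable
  -- Step 1: summability of the squared norms
  obtain ⟨C, hC⟩ := summable_partial_sums_bounded hsum
  have hc_sum : Summable c := by
    apply summable_of_sum_le (c := 2 * C^2) hc_nonneg
    intro F
    set ψF : H := ∑ Q ∈ F, Δ Q φ with hψF
    have hΔψF : ∀ R, Δ R ψF = if R ∈ F then Δ R φ else 0 := by
      intro R
      rw [hψF, map_sum]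
      by_cases hR : R ∈ F
      · rw [if_pos hR]
        rw [Finset.sum_eq_single_of_mem R hR]
        · rw [← ContinuousLinearMap.comp_apply, hΔidem]
        · intro Q hQ hQR
          rw [← ContinuousLinearMap.comp_apply, hΔΔ R Q (Ne.symm hQR),
            ContinuousLinearMap.zero_apply]
      · rw [if_neg hR, Finset.sum_eq_zero]
        intro Q hQ
        rw [← ContinuousLinearMap.comp_apply, hΔΔ R Q (fun h => hR (h ▸ hQ)),
          ContinuousLinearMap.zero_apply]
    have hsupp : ∀ R ∉ F, ‖Δ R ψF‖^2 = 0 := by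
      intro R hR; rw [hΔψF R, if_neg hR, norm_zero]; ring
    have hsummΔ : Summable (fun R => ‖Δ R ψF‖^2) := summable_of_ne_finset_zero hsupp
    have h1 : ∑ Q ∈ F, c Q = ∑ Q ∈ F, ‖Δ Q ψF‖^2 := by
      apply Finset.sum_congr rfl
      intro Q hQ; rw [hΔψF Q, if_pos hQ]
    have h2 : ∑ Q ∈ F, ‖Δ Q ψF‖^2 ≤ ∑' R, ‖Δ R ψF‖^2 :=
      Summable.sum_le_tsum F (fun R _ => sq_nonneg _) hsummΔ
    have h3 := hriesz_upper ψF
    have h4 : ‖ψF‖ ≤ C := hC F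
    have h5 : ‖ψF‖^2 ≤ C^2 := by
      have := abs_le_abs (α := ℝ) h4 (neg_le_of_neg_le (by linarith [norm_nonneg ψF]))
      nlinarith [norm_nonneg ψF]
    nlinarith [sq_nonneg ‖Λ ψF‖]
  have hc_tsum : ∑' Q, c Q ≤ 2 * ‖φ‖^2 := by
    have := hriesz_upper φ
    nlinarith [sq_nonneg ‖Λ φ‖]
  -- Step 2: pointwise bound
  have key : ∀ ω : Ω, ‖∑' Q, (if ω ∈ bad Q then Δ Q φ else 0)‖^2
      ≤ 2 * ∑' R, (if ω ∈ bad R then c R else 0) := by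
    intro ω
    set f : I → H := fun Q => if ω ∈ bad Q then Δ Q φ else 0 with hf
    have hfind : f = Set.indicator {Q | ω ∈ bad Q} (fun Q => Δ Q φ) := by
      funext Q; simp [hf, Set.indicator_apply, Set.mem_setOf_eq]
    have hfs : Summable f := by rw [hfind]; exact hsum.indicator _
    set ψ : H := ∑' Q, f Q with hψ
    have h0 : ∀ Q, Λ (f Q) = 0 := by
      intro Q
      by_cases h : ω ∈ bad Q
      · simp only [hf, if_pos h, ← ContinuousLinearMap.comp_apply, hΛΔ,
          ContinuousLinearMap.zero_apply]
      · simp [hf, if_neg h]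
    have hΛψ : Λ ψ = 0 := by
      rw [hψ, Λ.map_tsum hfs]
      simp only [h0, tsum_zero]
    have hΔψ : ∀ R, Δ R ψ = f R := by
      intro R
      rw [hψ, (Δ R).map_tsum hfs]
      rw [tsum_eq_single R]
      · by_cases h : ω ∈ bad R
        · simp only [hf, if_pos h, ← ContinuousLinearMap.comp_apply, hΔidem]
        · simp [hf, if_neg h]
      · intro Q hQ
        by_cases h : ω ∈ bad Q
        · simp only [hf, if_pos h, ← ContinuousLinearMap.comp_apply,
            hΔΔ R Q (Ne.symm hQ), ContinuousLinearMap.zero_apply]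
        · simp [hf, if_neg h]
    have hlow := hriesz_lower ψ
    rw [hΛψ] at hlow
    simp only [norm_zero] at hlow
    have htseq : ∑' R, ‖Δ R ψ‖^2 = ∑' R, (if ω ∈ bad R then c R else 0) := by
      apply tsum_congr
      intro R
      rw [hΔψ R]
      by_cases h : ω ∈ bad R
      · simp [hf, if_pos h, hc]
      · simp [hf, if_neg h]
    rw [htseq] at hlow
    have : (0:ℝ)^2 = 0 := by norm_num
    linarith [hlow]
  -- Step 3: integrate
  set F : Ω → ENNReal := fun ω => ∑' R, (if ω ∈ bad R then ENNReal.ofReal (c R) else 0)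
    with hF
  have hFmeas : Measurable F := by
    apply Measurable.ennreal_tsum
    intro R
    exact Measurable.ite (hbadmeas R) measurable_const measurable_const
  have hFtoReal : ∀ ω, (F ω).toReal = ∑' R, (if ω ∈ bad R then c R else 0) := by
    intro ω
    have hsub : Summable (fun R => if ω ∈ bad R then c R else 0) := by
      have : (fun R => if ω ∈ bad R then c R else 0)
          = Set.indicator {R | ω ∈ bad R} c := by
        funext R; simp [Set.indicator_apply, Set.mem_setOf_eq]
      rw [this]; exact hc_sum.indicator _
    have : F ω = ENNReal.ofReal (∑' R, (if ω ∈ bad R then c R else 0)) := by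
      rw [ENNReal.ofReal_tsum_of_nonneg (fun R => by positivity) hsub, hF]
      apply tsum_congr
      intro R
      by_cases h : ω ∈ bad R <;> simp [h]
    rw [this, ENNReal.toReal_ofReal (tsum_nonneg (fun R => by positivity))]
  have hlint : ∫⁻ ω, F ω ∂P ≤ ENNReal.ofReal δ * ENNReal.ofReal (2 * ‖φ‖^2) := by
    set g : I → Ω → ENNReal := fun R => (bad R).indicator (fun _ => ENNReal.ofReal (c R))
      with hg
    have hFg : ∀ ω, F ω = ∑' R, g R ω := by
      intro ω
      simp only [hF, hg]
      exact tsum_congr fun R => by simp [Set.indicator_apply]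
    calc ∫⁻ ω, F ω ∂P = ∫⁻ ω, ∑' R, g R ω ∂P := by
          exact lintegral_congr hFg
      _ = ∑' R, ∫⁻ ω, g R ω ∂P := lintegral_tsum (fun R =>
          ((measurable_const.indicator (hbadmeas R)).aemeasurable))
      _ = ∑' R, ENNReal.ofReal (c R) * P (bad R) := by
          exact tsum_congr fun R => lintegral_indicator_const (hbadmeas R) _
      _ ≤ ∑' R, ENNReal.ofReal (c R) * ENNReal.ofReal δ := by
          gcongr with R; exact hbadprob R
      _ = (∑' R, ENNReal.ofReal (c R)) * ENNReal.ofReal δ := by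
          rw [ENNReal.tsum_mul_right]
      _ = ENNReal.ofReal (∑' R, c R) * ENNReal.ofReal δ := by
          rw [ENNReal.ofReal_tsum_of_nonneg hc_nonneg hc_sum]
      _ ≤ ENNReal.ofReal δ * ENNReal.ofReal (2 * ‖φ‖^2) := by
          rw [mul_comm]
          gcongr
  have hlint_ne_top : ∫⁻ ω, F ω ∂P ≠ ⊤ :=
    ne_top_of_le_ne_top (by finiteness) hlint
  have hFint : Integrable (fun ω => (F ω).toReal) P :=
    integrable_toReal_of_lintegral_ne_top hFmeas.aemeasurable hlint_ne_top
  have hint_le : ∫ ω, ‖∑' Q, (if ω ∈ bad Q then Δ Q φ else 0)‖^2 ∂P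
      ≤ ∫ ω, 2 * (F ω).toReal ∂P := by
    apply integral_mono_of_nonneg
    · exact Filter.Eventually.of_forall (fun ω => sq_nonneg _)
    · exact hFint.const_mul 2
    · apply Filter.Eventually.of_forall
      intro ω
      calc ‖∑' Q, (if ω ∈ bad Q then Δ Q φ else 0)‖^2
          ≤ 2 * ∑' R, (if ω ∈ bad R then c R else 0) := key ω
        _ = 2 * (F ω).toReal := by rw [hFtoReal]
  have hval : ∫ ω, 2 * (F ω).toReal ∂P ≤ 4 * δ * ‖φ‖^2 := by
    rw [integral_const_mul, integral_toReal hFmeas.aemeasurable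
      (ae_lt_top hFmeas hlint_ne_top)]
    have h1 : (∫⁻ ω, F ω ∂P).toReal ≤ δ * (2 * ‖φ‖^2) := by
      calc (∫⁻ ω, F ω ∂P).toReal
          ≤ (ENNReal.ofReal δ * ENNReal.ofReal (2 * ‖φ‖^2)).toReal := by
            apply ENNReal.toReal_mono (by finiteness) hlint
        _ = δ * (2 * ‖φ‖^2) := by
            rw [ENNReal.toReal_mul, ENNReal.toReal_ofReal hδ,
              ENNReal.toReal_ofReal (by positivity)]
    linarith
  linarith
end
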